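/- arXiv:0906.1692 — 2 statements merged into one kernel-verified Lean document; each statement's English description precedes it below -/
import Mathlib

section
/- Let (𝔭₀, 𝔭∞) be a complementary pair of height-one parabolic subalgebras of a finite-dimensional real semisimple Lie algebra 𝔤, and let x ∈ 𝔭∞^⊥. Then ad x is nilpotent with (ad x)³ = 0, one always has 𝔭∞ ⊆ ker((ad x)²), and the height-one parabolic subalgebra exp(ad x)(𝔭₀) is complementary to both 𝔭₀ and 𝔭∞ if and only if ker((ad x)²) = 𝔭∞. -/
/-!
Write `𝔪 = 𝔭₀^⊥` and `𝔫 = 𝔭∞^⊥`. Since `𝔫` is abelian and stable under `ad 𝔭∞`, `(ad x)²` maps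
`𝔤` into `𝔫` and kills `𝔭∞`; hence `(ad x)³ = 0`, and `E = exp (ad x) = 1 + ad x + ½ (ad x)²` is
a Lie algebra automorphism, so `𝔭₁ = E 𝔭₀` is height-one parabolic with `𝔭₁^⊥ = E 𝔪`. As `E` fixes
`𝔭∞`, the pair `(𝔭₁, 𝔭∞)` is always complementary. Both conditions for `(𝔭₁, 𝔭₀)` reduce (the
first after applying `E⁻¹ = exp (ad (-x))`) to `𝔭₀ ∩ exp (ad y) 𝔪 = 0` for `y = ±x`, the dimensions
being right by nondegeneracy of the Killing form. Modulo `𝔭₀ ⊇ 𝔪 + ⁅𝔤, 𝔪⁆` we have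
`exp (ad y) m ≡ ½ (ad y)² m ∈ 𝔫`, so this holds iff `(ad y)²` is injective on `𝔪`, that is,
since `𝔤 = 𝔭∞ ⊕ 𝔪`, iff `ker (ad y)² = 𝔭∞`.
-/

open LieAlgebra Module

variable {L : Type*} [LieRing L] [LieAlgebra ℝ L]

/-- The Killing polar `𝔭^⊥` of a Lie subalgebra. -/
def killingPolar (p : LieSubalgebra ℝ L) : Submodule ℝ L where
  carrier := {x | ∀ y ∈ p, killingForm ℝ L x y = 0}
  add_mem' := fun ha hb => fun y hy => by simp [ha y hy, hb y hy]
  zero_mem' := fun y hy => by simp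
  smul_mem' := fun c a ha => fun y hy => by simp [ha y hy]

/-- A height-one parabolic subalgebra: the Killing polar is an abelian subalgebra. -/
def IsH1Parabolic (p : LieSubalgebra ℝ L) : Prop :=
  ∀ x ∈ killingPolar p, ∀ y ∈ killingPolar p, ⁅x, y⁆ = (0 : L)

/-- Complementary pair of height-one parabolic subalgebras. -/
def ComplPair (p q : LieSubalgebra ℝ L) : Prop :=
  IsCompl p.toSubmodule (killingPolar q) ∧ IsCompl q.toSubmodule (killingPolar p)

/-- `exp (ad z)`, the finite exponential series of the adjoint action (the sum is
exhaustive whenever `ad z` is nilpotent, since then `(ad z)^(dim 𝔤 + 1) = 0`). -/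
noncomputable def expAd [Module.Finite ℝ L] (z : L) : Module.End ℝ L :=
  ∑ k ∈ Finset.range (Module.finrank ℝ L + 1), (k.factorial : ℝ)⁻¹ • (ad ℝ L z) ^ k

lemma LinearEquiv.isCompl_map_iff {R M N : Type*} [Ring R] [AddCommGroup M] [AddCommGroup N]
    [Module R M] [Module R N] (f : M ≃ₗ[R] N) {A B : Submodule R M} :
    IsCompl (A.map (f : M →ₗ[R] N)) (B.map (f : M →ₗ[R] N)) ↔ IsCompl A B :=
  (Submodule.orderIsoMapComap f).isCompl_iff.symm

lemma IsCompl.disjoint_iff_eq_of_le {α : Type*} [Lattice α] [BoundedOrder α] [IsModularLattice α]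
    {a b c : α} (h : IsCompl a c) (hab : a ≤ b) : Disjoint b c ↔ b = a :=
  ⟨fun hbc => (eq_of_le_of_inf_le_of_sup_le (z := c) hab (by simp [hbc.eq_bot])
    (by simp [h.codisjoint.eq_top])).symm, fun hba => hba ▸ h.disjoint⟩

lemma Module.End.pow_finrank_eq_zero_of_isNilpotent {K V : Type*} [Field K] [AddCommGroup V]
    [Module K V] [FiniteDimensional K V] {φ : Module.End K V} (h : IsNilpotent φ) :
    φ ^ finrank K V = 0 := by
  simpa [h.charpoly_eq_X_pow_finrank] using φ.aeval_self_charpoly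

lemma ad_sq_apply (x g : L) : ((ad ℝ L x) ^ 2) g = ⁅x, ⁅x, g⁆⁆ := by
  simp [sq]

lemma ad_pow_three_eq_zero_iff {x : L} : (ad ℝ L x) ^ 3 = 0 ↔ ∀ g : L, ⁅x, ⁅x, ⁅x, g⁆⁆⁆ = 0 := by
  simp [LinearMap.ext_iff, pow_succ]

lemma ad_neg_pow_three_eq_zero {x : L} (h : (ad ℝ L x) ^ 3 = 0) : (ad ℝ L (-x)) ^ 3 = 0 := by
  rw [map_neg, Odd.neg_pow (by decide), h, neg_zero]

section CubeZero

variable {x : L}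

/-- For `D = ad x` the Leibniz rule gives `0 = D³⁅a, b⁆ = 3 (⁅D²a, Db⁆ + ⁅Da, D²b⁆)`. -/
lemma lie_ad_sq_ad_add_lie_ad_ad_sq_eq_zero (h3 : (ad ℝ L x) ^ 3 = 0) (a b : L) :
    ⁅⁅x, ⁅x, a⁆⁆, ⁅x, b⁆⁆ + ⁅⁅x, a⁆, ⁅x, ⁅x, b⁆⁆⁆ = 0 := by
  rw [ad_pow_three_eq_zero_iff] at h3
  set P := ⁅⁅x, ⁅x, a⁆⁆, ⁅x, b⁆⁆
  set Q := ⁅⁅x, a⁆, ⁅x, ⁅x, b⁆⁆⁆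
  have hleib : ⁅x, ⁅x, ⁅x, ⁅a, b⁆⁆⁆⁆ = (3 : ℝ) • (P + Q) := by
    rw [leibniz_lie x a b, lie_add, leibniz_lie x ⁅x, a⁆ b, leibniz_lie x a ⁅x, b⁆,
      lie_add, lie_add, lie_add, leibniz_lie x ⁅x, ⁅x, a⁆⁆ b, leibniz_lie x ⁅x, a⁆ ⁅x, b⁆,
      leibniz_lie x a ⁅x, ⁅x, b⁆⁆, h3 a, h3 b, zero_lie, lie_zero]
    module
  rw [h3, eq_comm, smul_eq_zero] at hleib
  exact hleib.resolve_left (by norm_num)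

lemma lie_ad_sq_ad_sq_eq_zero (h3 : (ad ℝ L x) ^ 3 = 0) (a b : L) :
    ⁅⁅x, ⁅x, a⁆⁆, ⁅x, ⁅x, b⁆⁆⁆ = 0 := by
  simpa [ad_pow_three_eq_zero_iff.mp h3 b] using
    lie_ad_sq_ad_add_lie_ad_ad_sq_eq_zero h3 a ⁅x, b⁆

end CubeZero

section Exponential

variable [FiniteDimensional ℝ L] {x : L}

lemma expAd_eq_sum_of_pow_eq_zero {n : ℕ} (h : (ad ℝ L x) ^ n = 0) :
    expAd x = ∑ k ∈ Finset.range n, (k.factorial : ℝ)⁻¹ • (ad ℝ L x) ^ k := by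
  have hfin := Module.End.pow_finrank_eq_zero_of_isNilpotent ⟨n, h⟩
  have hvanish : ∀ k ≥ min n (finrank ℝ L), (k.factorial : ℝ)⁻¹ • (ad ℝ L x) ^ k = 0 := by
    intro k hk
    rcases min_le_iff.mp hk with hnk | hnk
    · rw [pow_eq_zero_of_le hnk h, smul_zero]
    · rw [pow_eq_zero_of_le hnk hfin, smul_zero]
  rw [expAd, Finset.eventually_constant_sum hvanish (by omega),
    Finset.eventually_constant_sum hvanish (min_le_left _ _)]

lemma expAd_apply_of_ad_pow_three (h3 : (ad ℝ L x) ^ 3 = 0) (g : L) :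
    expAd x g = g + ⁅x, g⁆ + (2⁻¹ : ℝ) • ⁅x, ⁅x, g⁆⁆ := by
  simp [expAd_eq_sum_of_pow_eq_zero h3, Finset.sum_range_succ, Nat.factorial, sq]

lemma expAd_lie (h3 : (ad ℝ L x) ^ 3 = 0) (a b : L) :
    expAd x ⁅a, b⁆ = ⁅expAd x a, expAd x b⁆ := by
  have hsq : ⁅x, ⁅x, ⁅a, b⁆⁆⁆ =
      ⁅⁅x, ⁅x, a⁆⁆, b⁆ + (2 : ℝ) • ⁅⁅x, a⁆, ⁅x, b⁆⁆ + ⁅a, ⁅x, ⁅x, b⁆⁆⁆ := by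
    rw [leibniz_lie x a b, lie_add, leibniz_lie x ⁅x, a⁆ b, leibniz_lie x a ⁅x, b⁆]
    module
  have hPQ := lie_ad_sq_ad_add_lie_ad_ad_sq_eq_zero h3 a b
  have hRR := lie_ad_sq_ad_sq_eq_zero h3 a b
  rw [expAd_apply_of_ad_pow_three h3, expAd_apply_of_ad_pow_three h3,
    expAd_apply_of_ad_pow_three h3, hsq, leibniz_lie x a b]
  simp only [add_lie, lie_add, smul_lie, lie_smul, hRR, smul_zero]
  rw [eq_neg_of_add_eq_zero_left hPQ]
  module

lemma expAd_neg_apply_expAd (h3 : (ad ℝ L x) ^ 3 = 0) (g : L) :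
    expAd (-x) (expAd x g) = g := by
  have h3' := ad_pow_three_eq_zero_iff.mp h3
  rw [expAd_apply_of_ad_pow_three (ad_neg_pow_three_eq_zero h3), expAd_apply_of_ad_pow_three h3]
  simp only [neg_lie, lie_neg, lie_add, lie_smul, h3', neg_zero, smul_zero, add_zero,
    neg_neg]
  module

lemma expAd_injective (h3 : (ad ℝ L x) ^ 3 = 0) : Function.Injective (expAd x) :=
  Function.LeftInverse.injective (g := expAd (-x)) (expAd_neg_apply_expAd h3)

noncomputable def expAdEquiv (x : L) (h3 : (ad ℝ L x) ^ 3 = 0) : L ≃ₗ⁅ℝ⁆ L :=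
  { expAd x with
    map_lie' := expAd_lie h3 _ _
    invFun := expAd (-x)
    left_inv := expAd_neg_apply_expAd h3
    right_inv := fun g => by
      simpa using expAd_neg_apply_expAd (ad_neg_pow_three_eq_zero h3) g }

lemma expAd_mem {p : LieSubalgebra ℝ L} (h3 : (ad ℝ L x) ^ 3 = 0) (hx : x ∈ p) {g : L}
    (hg : g ∈ p) : expAd x g ∈ p := by
  rw [expAd_apply_of_ad_pow_three h3]
  exact add_mem (add_mem hg (p.lie_mem hx hg)) (p.smul_mem _ (p.lie_mem hx (p.lie_mem hx hg)))

lemma isCompl_map_expAd_iff (h3 : (ad ℝ L x) ^ 3 = 0) {A B : Submodule ℝ L} :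
    IsCompl (A.map (expAd x)) (B.map (expAd x)) ↔ IsCompl A B :=
  (expAdEquiv x h3).toLinearEquiv.isCompl_map_iff

lemma map_expAd_neg_map_expAd (h3 : (ad ℝ L x) ^ 3 = 0) (A : Submodule ℝ L) :
    (A.map (expAd x)).map (expAd (-x)) = A := by
  rw [← Submodule.map_comp]
  convert A.map_id
  exact LinearMap.ext (expAd_neg_apply_expAd h3)

lemma map_expAdEquiv_eq_self {p : LieSubalgebra ℝ L} (h3 : (ad ℝ L x) ^ 3 = 0) (hx : x ∈ p) :
    p.map (expAdEquiv x h3 : L →ₗ⁅ℝ⁆ L) = p := by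
  refine le_antisymm ?_ fun g hg => ?_
  · rintro _ ⟨g, hg, rfl⟩
    exact expAd_mem h3 hx hg
  · exact ⟨expAd (-x) g, expAd_mem (ad_neg_pow_three_eq_zero h3) (neg_mem hx) hg,
      (expAdEquiv x h3).apply_symm_apply g⟩

end Exponential

lemma killingForm_apply_lie_apply (x y z : L) :
    killingForm ℝ L ⁅x, y⁆ z = killingForm ℝ L x ⁅y, z⁆ :=
  LieModule.traceForm_apply_lie_apply ℝ L L x y z

lemma killingForm_apply_lie_apply' (x y z : L) :
    killingForm ℝ L ⁅x, y⁆ z = -killingForm ℝ L y ⁅x, z⁆ :=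
  LieModule.traceForm_apply_lie_apply' ℝ L L x y z

lemma killingForm_comm (x y : L) : killingForm ℝ L x y = killingForm ℝ L y x :=
  LieModule.traceForm_comm ℝ L L x y

lemma killingPolar_eq_orthogonal (p : LieSubalgebra ℝ L) :
    killingPolar p = (killingForm ℝ L).orthogonal p.toSubmodule := by
  ext z
  exact forall₂_congr fun y _ => by rw [killingForm_comm]

lemma lie_mem_killingPolar {p : LieSubalgebra ℝ L} {y u : L} (hy : y ∈ p)
    (hu : u ∈ killingPolar p) : ⁅y, u⁆ ∈ killingPolar p := fun z hz => by
  rw [← lie_skew, map_neg, LinearMap.neg_apply, killingForm_apply_lie_apply,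
    hu _ (p.lie_mem hy hz), neg_zero]

namespace IsH1Parabolic

variable {p : LieSubalgebra ℝ L} {x : L}

lemma lie_lie_eq_zero (hp : IsH1Parabolic p) (hx : x ∈ killingPolar p) {y : L} (hy : y ∈ p) :
    ⁅x, ⁅x, y⁆⁆ = 0 := by
  refine hp x hx _ ?_
  rw [← lie_skew]
  exact neg_mem (lie_mem_killingPolar hy hx)

lemma lie_lie_mem_killingPolar (hp : IsH1Parabolic p) (hx : x ∈ killingPolar p) (g : L) :
    ⁅x, ⁅x, g⁆⁆ ∈ killingPolar p := fun z hz => by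
  rw [killingForm_apply_lie_apply', killingForm_apply_lie_apply', hp.lie_lie_eq_zero hx hz,
    map_zero, neg_neg]

lemma ad_pow_three_eq_zero (hp : IsH1Parabolic p) (hx : x ∈ killingPolar p) :
    (ad ℝ L x) ^ 3 = 0 :=
  ad_pow_three_eq_zero_iff.mpr fun g => hp x hx _ (hp.lie_lie_mem_killingPolar hx g)

lemma le_ker_ad_sq (hp : IsH1Parabolic p) (hx : x ∈ killingPolar p) :
    p.toSubmodule ≤ LinearMap.ker ((ad ℝ L x) ^ 2) := fun y hy => by
  rw [LinearMap.mem_ker, ad_sq_apply]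
  exact hp.lie_lie_eq_zero hx hy

/-- `κ(w, w) = tr((ad w)²)` vanishes on `𝔭^⊥` because `(ad w)³ = 0`; then polarize. -/
lemma killingForm_eq_zero [FiniteDimensional ℝ L] (hp : IsH1Parabolic p) {u v : L}
    (hu : u ∈ killingPolar p) (hv : v ∈ killingPolar p) : killingForm ℝ L u v = 0 := by
  have hself : ∀ w ∈ killingPolar p, killingForm ℝ L w w = 0 := fun w hw => by
    have hnil : IsNilpotent ((ad ℝ L w) ∘ₗ (ad ℝ L w)) :=
      ⟨2, by rw [← Module.End.mul_eq_comp, ← sq, ← pow_mul,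
        pow_eq_zero_of_le (by norm_num) (hp.ad_pow_three_eq_zero hw)]⟩
    rw [killingForm_apply_apply]
    exact (LinearMap.isNilpotent_trace_of_isNilpotent hnil).eq_zero
  have hsum := hself (u + v) (add_mem hu hv)
  simp only [map_add, LinearMap.add_apply, hself u hu, hself v hv, killingForm_comm v u] at hsum
  linarith

end IsH1Parabolic

section Killing

variable [FiniteDimensional ℝ L] [IsKilling ℝ L]

lemma finrank_add_finrank_killingPolar (p : LieSubalgebra ℝ L) :
    finrank ℝ p.toSubmodule + finrank ℝ (killingPolar p) = finrank ℝ L := by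
  rw [killingPolar_eq_orthogonal, LinearMap.BilinForm.finrank_orthogonal
    (IsKilling.killingForm_nondegenerate ℝ L)]
  have := Submodule.finrank_le p.toSubmodule
  omega

lemma orthogonal_killingPolar (p : LieSubalgebra ℝ L) :
    (killingForm ℝ L).orthogonal (killingPolar p) = p.toSubmodule := by
  rw [killingPolar_eq_orthogonal, LinearMap.BilinForm.orthogonal_orthogonal
    (IsKilling.killingForm_nondegenerate ℝ L) (LieModule.traceForm_isSymm ℝ L L).isRefl]

namespace IsH1Parabolic

variable {p : LieSubalgebra ℝ L}

lemma killingPolar_le (hp : IsH1Parabolic p) : killingPolar p ≤ p.toSubmodule := by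
  rw [← orthogonal_killingPolar p]
  exact fun u hu v hv => hp.killingForm_eq_zero hv hu

/-- `⁅𝔤, 𝔭^⊥⁆` is orthogonal to the abelian `𝔭^⊥`, whose orthogonal is `𝔭`. -/
lemma lie_mem_of_mem_killingPolar (hp : IsH1Parabolic p) (y : L) {m : L}
    (hm : m ∈ killingPolar p) : ⁅y, m⁆ ∈ p := by
  rw [← LieSubalgebra.mem_toSubmodule, ← orthogonal_killingPolar p]
  intro d hd
  rw [killingForm_comm, killingForm_apply_lie_apply, hp m hm d hd, map_zero]

end IsH1Parabolic

end Killing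

section Automorphism

variable (e : L ≃ₗ⁅ℝ⁆ L)

lemma killingPolar_map (p : LieSubalgebra ℝ L) :
    killingPolar (p.map (e : L →ₗ⁅ℝ⁆ L)) = (killingPolar p).map (e : L →ₗ[ℝ] L) := by
  ext z
  constructor
  · intro hz
    refine ⟨e.symm z, fun y hy => ?_, e.apply_symm_apply z⟩
    rw [← killingForm_of_equiv_apply e, e.apply_symm_apply]
    exact hz _ ((LieSubalgebra.mem_map _ _ _).mpr ⟨y, hy, rfl⟩)
  · rintro ⟨w, hw, rfl⟩ _ ⟨y, hy, rfl⟩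
    exact (killingForm_of_equiv_apply e w y).trans (hw y hy)

lemma IsH1Parabolic.map {p : LieSubalgebra ℝ L} (hp : IsH1Parabolic p) :
    IsH1Parabolic (p.map (e : L →ₗ⁅ℝ⁆ L)) := by
  intro u hu v hv
  rw [killingPolar_map] at hu hv
  obtain ⟨a, ha, rfl⟩ := hu
  obtain ⟨b, hb, rfl⟩ := hv
  exact (e.map_lie a b).symm.trans (by simp [hp a ha b hb])

lemma complPair_map_iff {p q : LieSubalgebra ℝ L} :
    ComplPair (p.map (e : L →ₗ⁅ℝ⁆ L)) (q.map (e : L →ₗ⁅ℝ⁆ L)) ↔ ComplPair p q := by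
  simp only [ComplPair, killingPolar_map]
  exact and_congr e.toLinearEquiv.isCompl_map_iff e.toLinearEquiv.isCompl_map_iff

end Automorphism

section ComplementaryPair

variable [FiniteDimensional ℝ L] [IsKilling ℝ L] {p0 pinf : LieSubalgebra ℝ L} {y : L}

lemma disjoint_map_expAd_killingPolar_iff (h0 : IsH1Parabolic p0) (hinf : IsH1Parabolic pinf)
    (hdisj : Disjoint p0.toSubmodule (killingPolar pinf)) (hy : y ∈ killingPolar pinf) :
    Disjoint p0.toSubmodule ((killingPolar p0).map (expAd y)) ↔
      Disjoint (LinearMap.ker ((ad ℝ L y) ^ 2)) (killingPolar p0) := by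
  have h3 := hinf.ad_pow_three_eq_zero hy
  have hmod : ∀ m ∈ killingPolar p0, expAd y m - (2⁻¹ : ℝ) • ⁅y, ⁅y, m⁆⁆ ∈ p0 := fun m hm => by
    rw [expAd_apply_of_ad_pow_three h3, add_sub_cancel_right]
    exact add_mem (h0.killingPolar_le hm) (h0.lie_mem_of_mem_killingPolar y hm)
  simp only [Submodule.disjoint_def, Submodule.mem_map, LinearMap.mem_ker, ad_sq_apply,
    LieSubalgebra.mem_toSubmodule]
  constructor
  · intro h m hsq hm
    apply expAd_injective h3
    rw [map_zero]
    exact h _ (by simpa [hsq] using hmod m hm) ⟨m, hm, rfl⟩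
  · rintro h _ hz ⟨m, hm, rfl⟩
    have hhalf := sub_mem hz (hmod m hm)
    rw [sub_sub_cancel] at hhalf
    have hsq : ⁅y, ⁅y, m⁆⁆ = 0 := Submodule.disjoint_def.mp hdisj _
      ((Submodule.smul_mem_iff p0.toSubmodule (by norm_num : (2⁻¹ : ℝ) ≠ 0)).mp hhalf)
      (hinf.lie_lie_mem_killingPolar hy m)
    rw [h m hsq hm, map_zero]

lemma isCompl_map_expAd_killingPolar_iff (h0 : IsH1Parabolic p0) (hinf : IsH1Parabolic pinf)
    (hc : ComplPair p0 pinf) (hy : y ∈ killingPolar pinf) :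
    IsCompl p0.toSubmodule ((killingPolar p0).map (expAd y)) ↔
      LinearMap.ker ((ad ℝ L y) ^ 2) = pinf.toSubmodule := by
  have hinj := expAd_injective (hinf.ad_pow_three_eq_zero hy)
  have hdim : finrank ℝ L ≤
      finrank ℝ p0.toSubmodule + finrank ℝ ((killingPolar p0).map (expAd y)) := by
    rw [← ((killingPolar p0).equivMapOfInjective _ hinj).finrank_eq,
      finrank_add_finrank_killingPolar]
  rw [Submodule.isCompl_iff_disjoint _ _ hdim,
    disjoint_map_expAd_killingPolar_iff h0 hinf hc.1.disjoint hy,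
    hc.2.disjoint_iff_eq_of_le (hinf.le_ker_ad_sq hy)]

end ComplementaryPair

/-- For a complementary pair `(𝔭₀, 𝔭∞)` of height-one parabolic subalgebras and
`x ∈ 𝔭∞^⊥`: `ad x` is nilpotent with `(ad x)³ = 0`; always `𝔭∞ ⊆ ker (ad x)²`;
and `exp(ad x)(𝔭₀)` — which is again a height-one parabolic subalgebra — is
complementary to both `𝔭₀` and `𝔭∞` if and only if `ker (ad x)² = 𝔭∞`. -/
theorem expAd_complementary_iff_ker_sq
    [FiniteDimensional ℝ L] [LieAlgebra.IsSemisimple ℝ L]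
    (p0 pinf : LieSubalgebra ℝ L) (h0 : IsH1Parabolic p0) (hinf : IsH1Parabolic pinf)
    (hc : ComplPair p0 pinf) (x : L) (hx : x ∈ killingPolar pinf) :
    -- `ad x` is nilpotent with cube zero
    (ad ℝ L x) ^ 3 = 0 ∧
    -- `𝔭∞` is always contained in `ker (ad x)²`
    pinf.toSubmodule ≤ LinearMap.ker ((ad ℝ L x) ^ 2) ∧
    -- `exp(ad x)(𝔭₀)` is a height-one parabolic subalgebra, complementary to `𝔭₀`
    -- and `𝔭∞` precisely when `ker (ad x)² = 𝔭∞`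
    (∃ p1 : LieSubalgebra ℝ L, (p1 : Set L) = expAd x '' (p0 : Set L) ∧
      IsH1Parabolic p1 ∧
      ((ComplPair p1 p0 ∧ ComplPair p1 pinf) ↔
        LinearMap.ker ((ad ℝ L x) ^ 2) = pinf.toSubmodule)) := by
  have h3 := hinf.ad_pow_three_eq_zero hx
  have hc1 : ComplPair (p0.map (expAdEquiv x h3 : L →ₗ⁅ℝ⁆ L)) pinf := by
    simpa only [map_expAdEquiv_eq_self h3 (hinf.killingPolar_le hx)] using
      (complPair_map_iff (expAdEquiv x h3)).mpr hc
  -- pulled back along `exp (ad x)⁻¹ = exp (ad (-x))`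
  have hleft : IsCompl (p0.toSubmodule.map (expAd x)) (killingPolar p0) ↔
      LinearMap.ker ((ad ℝ L x) ^ 2) = pinf.toSubmodule := by
    rw [← isCompl_map_expAd_iff (ad_neg_pow_three_eq_zero h3), map_expAd_neg_map_expAd h3,
      isCompl_map_expAd_killingPolar_iff h0 hinf hc (neg_mem hx), map_neg, neg_sq]
  refine ⟨h3, hinf.le_ker_ad_sq hx, p0.map (expAdEquiv x h3 : L →ₗ⁅ℝ⁆ L), rfl, h0.map _, ?_⟩
  rw [and_iff_left hc1, ComplPair, killingPolar_map]
  exact (and_congr hleft (isCompl_map_expAd_killingPolar_iff h0 hinf hc hx)).trans and_self_iff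
end

section
/- Let (𝔭₀, 𝔭∞) be a complementary pair of height-one parabolic subalgebras of a finite-dimensional real semisimple Lie algebra 𝔤, U an open subset of a finite-dimensional real normed space E, F : U → 𝔭∞^⊥ smooth, ω a closed 𝔭₀^⊥-valued 1-form on U with ⁅(DF)_x(u), ω_x(v)⁆ = ⁅(DF)_x(v), ω_x(u)⁆ for all x, u, v, and η_x(u) := exp(ad F(x))(ω_x(u)). Let π : 𝔤 → 𝔭₀^⊥ be the linear projection with kernel 𝔭∞ (relative to the decomposition 𝔤 = 𝔭₀^⊥ ⊕ 𝔭∞). Then π(η_x(u)) = ω_x(u) for all x, u; consequently, if Φ : U → 𝔤 is smooth with (DΦ)_x = η_x for all x (a primitive of η), then F^c := π ∘ Φ satisfies (DF^c)_x = ω_x, i.e. the 𝔭₀^⊥-component of any primitive of η is a primitive of ω (a stereoprojected Christoffel transform of the isothermic map f = exp(ad F)(𝔭₀)). -/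
open Module

/-- A Lie algebra structure on a real normed space, recorded as a bilinear bracket.
(Using a bracket carried as data avoids typeclass diamonds between the normed and
the Lie-algebraic structure.) -/
structure LieStructure (L : Type*) [NormedAddCommGroup L] [NormedSpace ℝ L] where
  bracket : L →ₗ[ℝ] L →ₗ[ℝ] L
  alternating : ∀ x : L, bracket x x = 0
  jacobi : ∀ x y z : L, bracket x (bracket y z) =
    bracket (bracket x y) z + bracket y (bracket x z)

namespace LieStructure

variable {L : Type*} [NormedAddCommGroup L] [NormedSpace ℝ L] (B : LieStructure L)

/-- The adjoint action `ad x = ⁅x, ·⁆`. -/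
def ad (x : L) : Module.End ℝ L := B.bracket x

/-- The Killing form `κ(x, y) = tr (ad x ∘ ad y)`. -/
noncomputable def killing (x y : L) : ℝ := LinearMap.trace ℝ L (B.ad x * B.ad y)

/-- Semisimplicity, via Cartan's criterion: the Killing form is nondegenerate. -/
def IsSemisimple : Prop := ∀ x : L, (∀ y : L, B.killing x y = 0) → x = 0

/-- A Lie subalgebra: a submodule closed under the bracket. -/
def IsSubalgebra (p : Submodule ℝ L) : Prop :=
  ∀ x ∈ p, ∀ y ∈ p, B.bracket x y ∈ p

/-- The Killing polar `𝔭^⊥`. -/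
noncomputable def polar (p : Submodule ℝ L) : Submodule ℝ L where
  carrier := {x | ∀ y ∈ p, B.killing x y = 0}
  add_mem' := fun {a b} ha hb y hy => by
    have : B.killing (a + b) y = B.killing a y + B.killing b y := by
      simp [killing, ad, map_add, add_mul]
    rw [this, ha y hy, hb y hy, add_zero]
  zero_mem' := fun y hy => by simp [killing, ad, map_zero, zero_mul]
  smul_mem' := fun c a ha y hy => by
    have : B.killing (c • a) y = c * B.killing a y := by
      simp [killing, ad, map_smul, smul_mul_assoc]
    rw [this, ha y hy, mul_zero]

/-- A height-one parabolic subalgebra: a subalgebra whose Killing polar is an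
abelian (hence nilpotent) subalgebra. -/
def IsH1Parabolic (p : Submodule ℝ L) : Prop :=
  B.IsSubalgebra p ∧ ∀ x ∈ B.polar p, ∀ y ∈ B.polar p, B.bracket x y = 0

/-- Complementary pair of height-one parabolic subalgebras:
`𝔤 = 𝔭 ⊕ 𝔮^⊥` and `𝔤 = 𝔮 ⊕ 𝔭^⊥`. -/
noncomputable def ComplPair (p q : Submodule ℝ L) : Prop :=
  IsCompl p (B.polar q) ∧ IsCompl q (B.polar p)

/-- `exp (ad z)`, the finite exponential series of the adjoint action (exhaustive
whenever `ad z` is nilpotent, since then `(ad z)^(dim 𝔤 + 1) = 0`). -/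
noncomputable def expAd [FiniteDimensional ℝ L] (z : L) : Module.End ℝ L :=
  ∑ k ∈ Finset.range (Module.finrank ℝ L + 1), (k.factorial : ℝ)⁻¹ • (B.ad z) ^ k

end LieStructure

open LieStructure

/-! Since `𝔭∞^⊥` is abelian, invariance of the Killing form puts `⁅𝔭∞^⊥, 𝔤⁆` in the double
polar of `𝔭∞`, which is `𝔭∞` itself by complementarity and nondegeneracy. So every term of
`exp(ad F) ω` beyond `ω` lies in `𝔭∞ = ker π`, whence `π ∘ η = ω`; the chain rule does the rest. -/

namespace LieStructure

variable {L : Type*} [NormedAddCommGroup L] [NormedSpace ℝ L] (B : LieStructure L)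

theorem killing_comm (x y : L) : B.killing x y = B.killing y x :=
  LinearMap.trace_mul_comm ℝ (B.ad x) (B.ad y)

theorem killing_add_right (x y z : L) :
    B.killing x (y + z) = B.killing x y + B.killing x z := by
  simp [killing, ad, mul_add]

theorem killing_sub_left (x y z : L) :
    B.killing (x - y) z = B.killing x z - B.killing y z := by
  simp [killing, ad, sub_mul]

theorem ad_bracket (a b : L) :
    B.ad (B.bracket a b) = B.ad a * B.ad b - B.ad b * B.ad a := by
  ext z
  exact eq_sub_of_add_eq (B.jacobi a b z).symm

theorem killing_bracket_left (a b c : L) :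
    B.killing (B.bracket a b) c = -B.killing b (B.bracket a c) := by
  simp only [killing, ad_bracket, sub_mul, mul_sub, map_sub, mul_assoc]
  rw [LinearMap.trace_mul_comm ℝ (B.ad a) (B.ad b * B.ad c), mul_assoc]
  ring

theorem bracket_mem_polar_polar {q : Submodule ℝ L}
    (habel : ∀ x ∈ B.polar q, ∀ y ∈ B.polar q, B.bracket x y = 0)
    {a : L} (ha : a ∈ B.polar q) (b : L) : B.bracket a b ∈ B.polar (B.polar q) :=
  fun c hc => by
    rw [killing_bracket_left, habel a ha c hc]
    simp [killing, ad]

/-- Write `x = y + z` with `y ∈ 𝔮`, `z ∈ 𝔭^⊥`; then `z` is Killing-orthogonal to both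
`𝔭` and `𝔮^⊥`, which span `𝔤`, so `z = 0`. -/
theorem polar_polar_le (hss : B.IsSemisimple) {p q : Submodule ℝ L}
    (hpq : p ⊔ B.polar q = ⊤) (hqp : q ⊔ B.polar p = ⊤) :
    B.polar (B.polar q) ≤ q := by
  intro x hx
  obtain ⟨y, hy, z, hz, rfl⟩ := Submodule.mem_sup.mp (hqp ▸ Submodule.mem_top : x ∈ q ⊔ B.polar p)
  suffices z = 0 by simpa [this] using hy
  refine hss z fun t => ?_
  obtain ⟨s, hs, c, hc, rfl⟩ := Submodule.mem_sup.mp (hpq ▸ Submodule.mem_top : t ∈ p ⊔ B.polar q)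
  have hzc : B.killing z c = 0 := by
    rw [show z = y + z - y by abel, killing_sub_left, hx c hc, B.killing_comm y, hc y hy,
      sub_zero]
  rw [killing_add_right, hz s hs, hzc, add_zero]

theorem bracket_mem_of_mem_polar (hss : B.IsSemisimple) {p q : Submodule ℝ L}
    (hq : B.IsH1Parabolic q) (hpq : B.ComplPair p q)
    {a : L} (ha : a ∈ B.polar q) (b : L) : B.bracket a b ∈ q :=
  B.polar_polar_le hss hpq.1.sup_eq_top hpq.2.sup_eq_top (B.bracket_mem_polar_polar hq.2 ha b)

theorem expAd_apply_sub_mem [FiniteDimensional ℝ L] {q : Submodule ℝ L} {z : L}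
    (hz : ∀ w, B.bracket z w ∈ q) (v : L) : B.expAd z v - v ∈ q := by
  have hpow : ∀ k, (B.ad z ^ (k + 1)) v ∈ q := fun k => by
    rw [pow_succ']
    exact hz _
  rw [expAd, Finset.sum_range_succ']
  simp only [LinearMap.add_apply, LinearMap.sum_apply, LinearMap.smul_apply,
    Nat.factorial_zero, Nat.cast_one, inv_one, pow_zero, Module.End.one_apply, one_smul,
    add_sub_cancel_right]
  exact Submodule.sum_mem _ fun k _ => Submodule.smul_mem _ _ (hpow k)

end LieStructure

theorem LinearMap.apply_eq_of_apply_sub_eq_zero {R M : Type*} [Ring R] [AddCommGroup M]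
    [Module R M] (π : M →ₗ[R] M) {v w : M} (hv : π v = v) (hw : π (w - v) = 0) : π w = v := by
  rw [← sub_add_cancel w v, map_add, hw, hv, zero_add]

theorem christoffel_from_primitive_general
    {L : Type*} [NormedAddCommGroup L] [NormedSpace ℝ L] [FiniteDimensional ℝ L]
    (B : LieStructure L) (hss : B.IsSemisimple)
    {E : Type*} [NormedAddCommGroup E] [NormedSpace ℝ E] [FiniteDimensional ℝ E]
    (U : Set E) (hU : IsOpen U)
    (p0 pinf : Submodule ℝ L)
    (hinf : B.IsH1Parabolic pinf)
    (hc : B.ComplPair p0 pinf)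
    (F : E → L)
    (hFval : ∀ x ∈ U, F x ∈ B.polar pinf)
    (ω : E → E →L[ℝ] L)
    (hωval : ∀ x ∈ U, ∀ u : E, ω x u ∈ B.polar p0)
    (η : E → E →L[ℝ] L)
    (hη : ∀ x : E, η x = (LinearMap.toContinuousLinearMap (B.expAd (F x))).comp (ω x))
    -- `π` is the projection onto `𝔭₀^⊥` along `𝔭∞`
    (π : L →ₗ[ℝ] L)
    (hπ₁ : ∀ y ∈ B.polar p0, π y = y) (hπ₂ : ∀ y ∈ pinf, π y = 0) :
    (∀ x ∈ U, ∀ u : E, π (η x u) = ω x u) ∧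
    (∀ Φ : E → L, ContDiffOn ℝ (⊤ : ℕ∞) Φ U →
      (∀ x ∈ U, ∀ u : E, fderiv ℝ Φ x u = η x u) →
      ∀ x ∈ U, ∀ u : E, fderiv ℝ (fun y => π (Φ y)) x u = ω x u) := by
  have hproj : ∀ x ∈ U, ∀ u : E, π (η x u) = ω x u := fun x hx u => by
    have hsub : B.expAd (F x) (ω x u) - ω x u ∈ pinf :=
      B.expAd_apply_sub_mem (B.bracket_mem_of_mem_polar hss hinf hc (hFval x hx)) (ω x u)
    rw [hη x]
    exact π.apply_eq_of_apply_sub_eq_zero (hπ₁ _ (hωval x hx u)) (hπ₂ _ hsub)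
  refine ⟨hproj, fun Φ hΦ hΦ' x hx u => ?_⟩
  have hd : DifferentiableAt ℝ Φ x :=
    (hΦ.contDiffAt (hU.mem_nhds hx)).differentiableAt (by simp)
  have hchain : fderiv ℝ (fun y => π (Φ y)) x =
      (LinearMap.toContinuousLinearMap π).comp (fderiv ℝ Φ x) :=
    ((LinearMap.toContinuousLinearMap π).hasFDerivAt.comp x hd.hasFDerivAt).fderiv
  rw [hchain, ← hproj x hx u, ← hΦ' x hx u]
  rfl

/-- **Universal Christoffel transform.**  With `η = exp(ad F)·ω` as in the
stereoprojected isothermic setting, and `π : 𝔤 → 𝔭₀^⊥` the projection with kernel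
`𝔭∞` (for `𝔤 = 𝔭₀^⊥ ⊕ 𝔭∞`), one has `π(η_x(u)) = ω_x(u)`; hence the
`𝔭₀^⊥`-component `F^c := π ∘ Φ` of any primitive `Φ` of `η` is a primitive of `ω`
(a stereoprojected Christoffel transform). -/
theorem christoffel_from_primitive
    {L : Type*} [NormedAddCommGroup L] [NormedSpace ℝ L] [FiniteDimensional ℝ L]
    (B : LieStructure L) (hss : B.IsSemisimple)
    {E : Type*} [NormedAddCommGroup E] [NormedSpace ℝ E] [FiniteDimensional ℝ E]
    (U : Set E) (hU : IsOpen U)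
    (p0 pinf : Submodule ℝ L)
    (h0 : B.IsH1Parabolic p0) (hinf : B.IsH1Parabolic pinf)
    (hc : B.ComplPair p0 pinf)
    (F : E → L) (hF : ContDiffOn ℝ (⊤ : ℕ∞) F U)
    (hFval : ∀ x ∈ U, F x ∈ B.polar pinf)
    (ω : E → E →L[ℝ] L) (hω : ContDiffOn ℝ (⊤ : ℕ∞) ω U)
    (hωval : ∀ x ∈ U, ∀ u : E, ω x u ∈ B.polar p0)
    (hωclosed : ∀ x ∈ U, ∀ u v : E, fderiv ℝ ω x u v = fderiv ℝ ω x v u)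
    (hsymm : ∀ x ∈ U, ∀ u v : E,
      B.bracket (fderiv ℝ F x u) (ω x v) = B.bracket (fderiv ℝ F x v) (ω x u))
    (η : E → E →L[ℝ] L)
    (hη : ∀ x : E, η x = (LinearMap.toContinuousLinearMap (B.expAd (F x))).comp (ω x))
    -- `π` is the projection onto `𝔭₀^⊥` along `𝔭∞`
    (π : L →ₗ[ℝ] L)
    (hπ₁ : ∀ y ∈ B.polar p0, π y = y) (hπ₂ : ∀ y ∈ pinf, π y = 0) :
    (∀ x ∈ U, ∀ u : E, π (η x u) = ω x u) ∧
    (∀ Φ : E → L, ContDiffOn ℝ (⊤ : ℕ∞) Φ U →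
      (∀ x ∈ U, ∀ u : E, fderiv ℝ Φ x u = η x u) →
      ∀ x ∈ U, ∀ u : E, fderiv ℝ (fun y => π (Φ y)) x u = ω x u) :=
  christoffel_from_primitive_general B hss U hU p0 pinf hinf hc F hFval ω hωval η hη π hπ₁ hπ₂
end
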